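/- arXiv:1912.08627 — 2 statements merged into one kernel-verified Lean document; each statement's English description precedes it below -/
import Mathlib

section
/- Let p(x) = (1/4π)((x₃−c)/|x−ce₃|³ − (x₃−1/c)/(c³|x−e₃/c|³)) on B₁(0) ⊂ ℝ³ for c ∈ (0,1). Then the velocity w = −∇p restricted to the unit sphere equals w(x) = (3/4π)·(1−c²)/|x−ce₃|⁵ · (x₃x − e₃), which is tangent to the sphere at each point x ∈ ∂B₁(0). -/
/-!
The pressure is the potential of a dipole at `c e₃` plus its Kelvin image, a dipole of strength
`-c⁻³` at `e₃ / c`. On the unit sphere `|x - e₃ / c| = |x - c e₃| / c`, and with this the gradients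
of the two dipole potentials combine into `(3 (1 - c²) / |x - c e₃|⁵) (e₃ - x₃ x)`, which is
orthogonal to `x` because `|x| = 1`.
-/

open Real InnerProductSpace

variable {E : Type*} [NormedAddCommGroup E] [InnerProductSpace ℝ E]

theorem norm_sub_inv_smul_eq_norm_sub_smul_div {e x : E} {c : ℝ} (he : ‖e‖ = 1) (hx : ‖x‖ = 1)
    (hc : 0 < c) : ‖x - c⁻¹ • e‖ = ‖x - c • e‖ / c := by
  rw [← sq_eq_sq₀ (norm_nonneg _) (by positivity), div_pow, norm_sub_sq_real, norm_sub_sq_real,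
    real_inner_smul_right, real_inner_smul_right, norm_smul, norm_smul, he, hx, Real.norm_eq_abs,
    Real.norm_eq_abs, abs_of_pos hc, abs_inv, abs_of_pos hc]
  field_simp
  ring

section Gradient

variable [CompleteSpace E] {f g : E → ℝ} {f' g' x : E}

theorem HasGradientAt.sub (hf : HasGradientAt f f' x) (hg : HasGradientAt g g' x) :
    HasGradientAt (fun y => f y - g y) (f' - g') x := by
  rw [hasGradientAt_iff_hasFDerivAt, map_sub]
  exact HasFDerivAt.sub hf hg

theorem HasGradientAt.const_mul (a : ℝ) (hf : HasGradientAt f f' x) :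
    HasGradientAt (fun y => a * f y) (a • f') x := by
  rw [hasGradientAt_iff_hasFDerivAt, map_smul]
  exact HasFDerivAt.const_mul hf a

theorem HasGradientAt.mul (hf : HasGradientAt f f' x) (hg : HasGradientAt g g' x) :
    HasGradientAt (fun y => f y * g y) (f x • g' + g x • f') x := by
  rw [hasGradientAt_iff_hasFDerivAt, map_add, map_smul, map_smul]
  exact HasFDerivAt.mul hf hg

theorem hasGradientAt_inner_sub (e v x : E) : HasGradientAt (fun y => ⟪e, y - v⟫_ℝ) e x := by
  simp_rw [inner_sub_right]
  exact (toDual ℝ E e).hasFDerivAt.sub_const _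

theorem hasGradientAt_inv_norm_sub_pow_three {v : E} (hx : x ≠ v) :
    HasGradientAt (fun y => (‖y - v‖ ^ 3)⁻¹) (-(3 / ‖x - v‖ ^ 5) • (x - v)) x := by
  have hr : ‖x - v‖ ≠ 0 := by simpa [sub_eq_zero] using hx
  have hcube : HasFDerivAt (fun y : E => ‖y - v‖ ^ 3)
      ((3 * ‖x - v‖) • innerSL ℝ (x - v)) x := by
    have := (hasFDerivAt_norm_rpow (x - v) (p := 3) (by norm_num)).comp x
      ((hasFDerivAt_id x).sub_const v)
    norm_num at this
    rwa [← map_sub] at this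
  have := (hasDerivAt_inv (pow_ne_zero 3 hr)).comp_hasFDerivAt x hcube
  refine hasGradientAt_iff_hasFDerivAt.2 (this.congr_fderiv ?_)
  ext y
  simp only [map_sub, neg_smul, neg_apply, smul_apply, sub_apply, coe_innerSL_apply, smul_eq_mul,
    map_neg, map_smul, toDual_apply_apply, neg_inj]
  field_simp

noncomputable def dipolePotential (e v : E) (y : E) : ℝ := ⟪e, y - v⟫_ℝ / ‖y - v‖ ^ 3

theorem hasGradientAt_dipolePotential (e : E) {v : E} (hx : x ≠ v) :
    HasGradientAt (dipolePotential e v)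
      ((‖x - v‖ ^ 3)⁻¹ • e - (3 * ⟪e, x - v⟫_ℝ / ‖x - v‖ ^ 5) • (x - v)) x := by
  convert (hasGradientAt_inner_sub e v x).mul (hasGradientAt_inv_norm_sub_pow_three hx) using 1
  · ext y
    rw [dipolePotential, div_eq_mul_inv]
  · module

theorem hasGradientAt_dipolePotential_sub_kelvinImage {e : E} {c : ℝ} (he : ‖e‖ = 1)
    (hx : ‖x‖ = 1) (hc0 : 0 < c) (hc1 : c ≠ 1) :
    HasGradientAt (fun y => dipolePotential e (c • e) y - (c ^ 3)⁻¹ * dipolePotential e (c⁻¹ • e) y)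
      ((3 * (1 - c ^ 2) / ‖x - c • e‖ ^ 5) • (e - ⟪e, x⟫_ℝ • x)) x := by
  have hx_ne : ∀ a : ℝ, 0 < a → a ≠ 1 → x ≠ a • e := fun a ha ha1 h =>
    ha1 (by simpa [h, norm_smul, he, abs_of_pos ha] using hx)
  have hr : 0 < ‖x - c • e‖ := norm_pos_iff.2 (sub_ne_zero.2 (hx_ne c hc0 hc1))
  convert (hasGradientAt_dipolePotential e (hx_ne c hc0 hc1)).sub
    ((hasGradientAt_dipolePotential e (hx_ne c⁻¹ (inv_pos.2 hc0) (inv_ne_one.2 hc1))).const_mul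
      (c ^ 3)⁻¹) using 1
  rw [norm_sub_inv_smul_eq_norm_sub_smul_div he hx hc0, inner_sub_right, inner_sub_right,
    real_inner_smul_right, real_inner_smul_right, real_inner_self_eq_norm_sq, he]
  match_scalars <;> field_simp <;> ring

end Gradient

/-- for the pressure
`p(x) = (1/4π)((x₃−c)/|x−ce₃|³ − (x₃−1/c)/(c³|x−e₃/c|³))` on `B₁(0) ⊂ ℝ³`,
`c ∈ (0,1)`, the velocity `w = −∇p` restricted to the unit sphere equals
`w(x) = (3/4π)·(1−c²)/|x−ce₃|⁵ · (x₃ x − e₃)`, which is tangent to the sphere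
at each point `x ∈ ∂B₁(0)`. -/
theorem statement2 (c : ℝ) (hc : c ∈ Set.Ioo (0 : ℝ) 1)
    (e₃ : EuclideanSpace ℝ (Fin 3)) (he₃ : e₃ = EuclideanSpace.single 2 1)
    (p : EuclideanSpace ℝ (Fin 3) → ℝ)
    (hp : ∀ x : EuclideanSpace ℝ (Fin 3), p x =
      (4 * π)⁻¹ * ((x 2 - c) / ‖x - c • e₃‖ ^ 3
        - (x 2 - 1 / c) / (c ^ 3 * ‖x - c⁻¹ • e₃‖ ^ 3)))
    (w : EuclideanSpace ℝ (Fin 3) → EuclideanSpace ℝ (Fin 3))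
    (hw : ∀ x : EuclideanSpace ℝ (Fin 3), w x =
      ((3 / (4 * π)) * ((1 - c ^ 2) / ‖x - c • e₃‖ ^ 5)) • (x 2 • x - e₃)) :
    ∀ x : EuclideanSpace ℝ (Fin 3), ‖x‖ = 1 →
      -gradient p x = w x ∧ ⟪w x, x⟫_ℝ = 0 := by
  intro x hx
  have he₃_norm : ‖e₃‖ = 1 := by simp [he₃]
  have hcoord (y : EuclideanSpace ℝ (Fin 3)) : ⟪e₃, y⟫_ℝ = y 2 := by
    simp [he₃, EuclideanSpace.inner_single_left]
  have hp_dipoles : p = fun y => (4 * π)⁻¹ *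
      (dipolePotential e₃ (c • e₃) y - (c ^ 3)⁻¹ * dipolePotential e₃ (c⁻¹ • e₃) y) := by
    funext y
    have he₃_coord : e₃ 2 = 1 := by simp [he₃]
    simp only [hp, dipolePotential, hcoord, PiLp.sub_apply, PiLp.smul_apply, smul_eq_mul,
      he₃_coord]
    ring
  have hgrad := (hasGradientAt_dipolePotential_sub_kelvinImage he₃_norm hx hc.1 hc.2.ne).const_mul
    (4 * π)⁻¹
  rw [← hp_dipoles, hcoord] at hgrad
  refine ⟨?_, ?_⟩
  · rw [hgrad.gradient, hw]
    module
  · rw [hw, real_inner_smul_left, inner_sub_left, real_inner_smul_left, real_inner_self_eq_norm_sq,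
      hx, hcoord]
    ring
end

section
/- For x on the unit sphere in ℝ³ and c ∈ (0,1), the function h(x₃) = √(1−x₃²)/((x₃−c)² + 1 − x₃²)^{5/2}, defined for x₃ ∈ [−1,1], attains its maximum over x₃ ∈ [−1,1] at x₃* = (√((c²+1)² + 60c²) − (c²+1))/(6c). -/
set_option maxHeartbeats 1000000


open Real Set

/-- for `c ∈ (0,1)` the function
`h(x₃) = √(1−x₃²)/((x₃−c)² + 1 − x₃²)^{5/2}` on `[−1,1]` attains its maximum
at `x₃* = (√((c²+1)² + 60c²) − (c²+1))/(6c)`. -/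
theorem statement3 (c : ℝ) (hc : c ∈ Set.Ioo (0 : ℝ) 1)
    (h : ℝ → ℝ)
    (hh : ∀ t, h t = Real.sqrt (1 - t ^ 2) / ((t - c) ^ 2 + 1 - t ^ 2) ^ ((5 : ℝ) / 2))
    (x₃ : ℝ)
    (hx₃ : x₃ = (Real.sqrt ((c ^ 2 + 1) ^ 2 + 60 * c ^ 2) - (c ^ 2 + 1)) / (6 * c)) :
    x₃ ∈ Set.Icc (-1 : ℝ) 1 ∧ IsMaxOn h (Set.Icc (-1 : ℝ) 1) x₃ := by
  obtain ⟨hc0, hc1⟩ := hc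
  have hsnn : 0 ≤ Real.sqrt ((c ^ 2 + 1) ^ 2 + 60 * c ^ 2) := Real.sqrt_nonneg _
  have hs2 : Real.sqrt ((c ^ 2 + 1) ^ 2 + 60 * c ^ 2) ^ 2 = (c ^ 2 + 1) ^ 2 + 60 * c ^ 2 :=
    Real.sq_sqrt (by positivity)
  have h6 : (6 : ℝ) * c ≠ 0 := by positivity
  have hxs : 6 * c * x₃ = Real.sqrt ((c ^ 2 + 1) ^ 2 + 60 * c ^ 2) - (c ^ 2 + 1) := by
    rw [hx₃]; field_simp
  have hkey : 3 * c * x₃ ^ 2 + (c ^ 2 + 1) * x₃ - 5 * c = 0 := by nlinarith [hxs, hs2]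
  have hsgt : c ^ 2 + 1 < Real.sqrt ((c ^ 2 + 1) ^ 2 + 60 * c ^ 2) := by
    nlinarith [hs2, hsnn]
  have ha0 : 0 < x₃ := by
    rw [hx₃]; apply div_pos (by linarith) (by positivity)
  have ha1 : x₃ < 1 := by nlinarith [hkey, ha0]
  -- the squared function (up to a power), without square roots
  set g : ℝ → ℝ := fun t => (1 - t ^ 2) / (c ^ 2 + 1 - 2 * c * t) ^ 5 with hg
  have hApos : ∀ t : ℝ, t ≤ 1 → 0 < c ^ 2 + 1 - 2 * c * t := by
    intro t ht; nlinarith [sq_nonneg (1 - c)]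
  -- derivative of g
  have hderiv : ∀ t : ℝ, c ^ 2 + 1 - 2 * c * t ≠ 0 →
      HasDerivAt g ((-(2 * t) * (c ^ 2 + 1 - 2 * c * t) ^ 5 -
        (1 - t ^ 2) * ((5 : ℕ) * (c ^ 2 + 1 - 2 * c * t) ^ 4 * (-(2 * c)))) /
        ((c ^ 2 + 1 - 2 * c * t) ^ 5) ^ 2) t := by
    intro t hA
    have hN : HasDerivAt (fun t : ℝ => 1 - t ^ 2) (-(2 * t)) t := by
      simpa using (hasDerivAt_pow 2 t).const_sub 1
    have hA' : HasDerivAt (fun t : ℝ => c ^ 2 + 1 - 2 * c * t) (-(2 * c)) t := by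
      simpa using ((hasDerivAt_id t).const_mul (2 * c)).const_sub (c ^ 2 + 1)
    have hD : HasDerivAt (fun t : ℝ => (c ^ 2 + 1 - 2 * c * t) ^ 5)
        ((5 : ℕ) * (c ^ 2 + 1 - 2 * c * t) ^ 4 * (-(2 * c))) t := by
      simpa using hA'.fun_pow 5
    exact hN.div hD (pow_ne_zero 5 hA)
  have hcont : ContinuousOn g (Set.Icc (-1 : ℝ) 1) := by
    apply ContinuousOn.div (by fun_prop) (by fun_prop)
    intro t ht
    exact pow_ne_zero 5 (ne_of_gt (hApos t ht.2))
  -- monotone on [-1, x₃]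
  have hmono : MonotoneOn g (Set.Icc (-1 : ℝ) x₃) := by
    apply monotoneOn_of_deriv_nonneg (convex_Icc _ _)
      (hcont.mono (Set.Icc_subset_Icc le_rfl ha1.le))
    · intro t ht
      rw [interior_Icc] at ht
      exact ((hderiv t (ne_of_gt (hApos t (by linarith [ht.2])))).differentiableAt).differentiableWithinAt
    · intro t ht
      rw [interior_Icc] at ht
      have htA : 0 < c ^ 2 + 1 - 2 * c * t := hApos t (by linarith [ht.2])
      rw [(hderiv t (ne_of_gt htA)).deriv]
      apply div_nonneg _ (sq_nonneg _)
      have hp : 3 * c * t ^ 2 + (c ^ 2 + 1) * t - 5 * c ≤ 0 := by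
        have cert : (x₃ + 1) * (3 * c * t ^ 2 + (c ^ 2 + 1) * t - 5 * c) =
            -(x₃ - t) * (1 + c) ^ 2 + (t + 1) * (3 * c * x₃ ^ 2 + (c ^ 2 + 1) * x₃ - 5 * c)
              - 3 * c * (t + 1) * (x₃ - t) * (x₃ + 1) := by ring
        have h1 : (0:ℝ) ≤ x₃ - t := by linarith [ht.2]
        have h2 : (0:ℝ) ≤ t + 1 := by linarith [ht.1]
        have h3 : (0:ℝ) < x₃ + 1 := by linarith
        have hle : (x₃ + 1) * (3 * c * t ^ 2 + (c ^ 2 + 1) * t - 5 * c) ≤ 0 := by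
          rw [cert, hkey]
          have t1 : 0 ≤ (x₃ - t) * (1 + c) ^ 2 := mul_nonneg h1 (sq_nonneg _)
          have t2 : 0 ≤ 3 * c * ((t + 1) * ((x₃ - t) * (x₃ + 1))) := by positivity
          linarith [t1, t2]
        nlinarith [hle, h3]
      have hprod : 0 ≤ (c ^ 2 + 1 - 2 * c * t) ^ 4 *
          (-(3 * c * t ^ 2 + (c ^ 2 + 1) * t - 5 * c)) :=
        mul_nonneg (by positivity) (by linarith)
      have heq : -(2 * t) * (c ^ 2 + 1 - 2 * c * t) ^ 5 -
          (1 - t ^ 2) * ((5:ℕ) * (c ^ 2 + 1 - 2 * c * t) ^ 4 * -(2 * c)) =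
          2 * ((c ^ 2 + 1 - 2 * c * t) ^ 4 *
            (-(3 * c * t ^ 2 + (c ^ 2 + 1) * t - 5 * c))) := by
        push_cast; ring
      rw [heq]
      linarith [hprod]
  -- antitone on [x₃, 1]
  have hanti : AntitoneOn g (Set.Icc x₃ 1) := by
    apply antitoneOn_of_deriv_nonpos (convex_Icc _ _)
      (hcont.mono (Set.Icc_subset_Icc (by linarith) le_rfl))
    · intro t ht
      rw [interior_Icc] at ht
      exact ((hderiv t (ne_of_gt (hApos t (by linarith [ht.2])))).differentiableAt).differentiableWithinAt
    · intro t ht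
      rw [interior_Icc] at ht
      have htA : 0 < c ^ 2 + 1 - 2 * c * t := hApos t ht.2.le
      rw [(hderiv t (ne_of_gt htA)).deriv]
      apply div_nonpos_of_nonpos_of_nonneg _ (sq_nonneg _)
      have hp : 0 ≤ 3 * c * t ^ 2 + (c ^ 2 + 1) * t - 5 * c := by
        have cert : 3 * c * t ^ 2 + (c ^ 2 + 1) * t - 5 * c =
            (3 * c * x₃ ^ 2 + (c ^ 2 + 1) * x₃ - 5 * c)
              + (t - x₃) * (3 * c * (t + x₃) + c ^ 2 + 1) := by ring
        have h1 : (0:ℝ) ≤ t - x₃ := by linarith [ht.1]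
        have h2 : (0:ℝ) ≤ 3 * c * (t + x₃) + c ^ 2 + 1 := by nlinarith [ht.1]
        rw [cert, hkey]
        linarith [mul_nonneg h1 h2]
      have hprod : 0 ≤ (c ^ 2 + 1 - 2 * c * t) ^ 4 *
          (3 * c * t ^ 2 + (c ^ 2 + 1) * t - 5 * c) :=
        mul_nonneg (by positivity) hp
      have heq : -(2 * t) * (c ^ 2 + 1 - 2 * c * t) ^ 5 -
          (1 - t ^ 2) * ((5:ℕ) * (c ^ 2 + 1 - 2 * c * t) ^ 4 * -(2 * c)) =
          -(2 * ((c ^ 2 + 1 - 2 * c * t) ^ 4 *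
            (3 * c * t ^ 2 + (c ^ 2 + 1) * t - 5 * c))) := by
        push_cast; ring
      rw [heq]
      linarith [hprod]
  have hx₃mem : x₃ ∈ Set.Icc (-1 : ℝ) 1 := ⟨by linarith, ha1.le⟩
  refine ⟨hx₃mem, ?_⟩
  -- h t = sqrt (g t) on [-1,1]
  have hsqrt : ∀ t : ℝ, t ∈ Set.Icc (-1 : ℝ) 1 → h t = Real.sqrt (g t) := by
    intro t ht
    have htA : 0 < c ^ 2 + 1 - 2 * c * t := hApos t ht.2
    have h1t : 0 ≤ 1 - t ^ 2 := by nlinarith [ht.1, ht.2]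
    rw [hh t]
    have hbase : (t - c) ^ 2 + 1 - t ^ 2 = c ^ 2 + 1 - 2 * c * t := by ring
    rw [hbase]
    have hrpow : (c ^ 2 + 1 - 2 * c * t) ^ ((5 : ℝ) / 2) =
        Real.sqrt ((c ^ 2 + 1 - 2 * c * t) ^ 5) := by
      rw [show (5 : ℝ) / 2 = ((5 : ℕ) : ℝ) * (1 / 2 : ℝ) by norm_num,
        Real.rpow_mul htA.le, Real.rpow_natCast, Real.sqrt_eq_rpow]
    rw [hrpow, ← Real.sqrt_div h1t]
  rw [isMaxOn_iff]
  intro t ht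
  rw [hsqrt t ht, hsqrt x₃ hx₃mem]
  apply Real.sqrt_le_sqrt
  rcases le_total t x₃ with hle | hle
  · exact hmono ⟨ht.1, hle⟩ ⟨by linarith, le_rfl⟩ hle
  · exact hanti ⟨le_rfl, ha1.le⟩ ⟨hle, ht.2⟩ hle
end
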